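/- In a rotationally asymmetric configuration of finitely many distinct points on a circle, if there are two undecided leaders L (the true leader) and r, then the first clockwise neighbors of L and of r are not antipodal to each other. -/

import Mathlib

open Real
open scoped Classical

noncomputable section

/-- Clockwise angular distance from `p` to `q`, a real number in `[0, 2π)`. -/
def cw (p q : Real.Angle) : ℝ :=
  if 0 ≤ (q - p).toReal then (q - p).toReal else (q - p).toReal + 2 * π

/-- The sorted list of clockwise distances from `p` to the points of `S`. -/
def dists (S : Finset Real.Angle) (p : Real.Angle) : List ℝ :=
  (S.image (cw p)).sort (· ≤ ·)

/-- The clockwise angular-gap sequence of `p` with respect to the configuration `S`: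
the sequence of clockwise gaps between consecutive points, starting from `p`. -/
def gapSeq (S : Finset Real.Angle) (p : Real.Angle) : List ℝ :=
  List.zipWith (fun a b => a - b) ((dists S p).tail ++ [2 * π]) (dists S p)

/-- Lexicographic strict order on lists of reals. -/
def lexLt (a b : List ℝ) : Prop := List.Lex (· < ·) a b

/-- `L` is the true leader of `S`: its angular-gap sequence is lexicographically
strictly smallest. -/
def TrueLeader (S : Finset Real.Angle) (L : Real.Angle) : Prop :=
  L ∈ S ∧ ∀ r ∈ S, r ≠ L → lexLt (gapSeq S L) (gapSeq S r)

/-- `S` is rotationally asymmetric: no nontrivial rotation about the center fixes `S`. -/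
def RotAsym (S : Finset Real.Angle) : Prop :=
  ∀ θ : Real.Angle, θ ≠ 0 → S.image (· + θ) ≠ S

/-- The antipodal position of a point on the circle. -/
def antipode (p : Real.Angle) : Real.Angle := p + (π : Real.Angle)

/-- The hypothetical configuration in which the antipode of `r` is unoccupied. -/
def C0 (S : Finset Real.Angle) (r : Real.Angle) : Finset Real.Angle := S.erase (antipode r)

/-- The hypothetical configuration in which the antipode of `r` is occupied. -/
def C1 (S : Finset Real.Angle) (r : Real.Angle) : Finset Real.Angle := insert (antipode r) S

/-- `r` is an undecided leader: both hypothetical configurations are rotationally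
asymmetric and `r` is the true leader of exactly one of them. -/
def Undecided (S : Finset Real.Angle) (r : Real.Angle) : Prop :=
  r ∈ S ∧ RotAsym (C0 S r) ∧ RotAsym (C1 S r) ∧
    Xor' (TrueLeader (C0 S r) r) (TrueLeader (C1 S r) r)

/-- `r` is a cognizant leader: `r` is the true leader in every consistent
(hypothetical) configuration. -/
def Cognizant (S : Finset Real.Angle) (r : Real.Angle) : Prop :=
  r ∈ S ∧ (RotAsym (C0 S r) → TrueLeader (C0 S r) r) ∧
    (RotAsym (C1 S r) → TrueLeader (C1 S r) r)

/-- An expected leader is a cognizant leader or an undecided leader. -/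
def ExpectedLeader (S : Finset Real.Angle) (r : Real.Angle) : Prop :=
  Cognizant S r ∨ Undecided S r

/-- `q` is the first clockwise neighbor of `p` in `S`. -/
def IsCwNbr (S : Finset Real.Angle) (p q : Real.Angle) : Prop :=
  q ∈ S ∧ q ≠ p ∧ ∀ x ∈ S, x ≠ p → cw p q ≤ cw p x

/-
Suppose `n₂ = n₁ + π` and put `a = cw L r`, `λ₁ = cw L n₁`, `λ₂ = cw r n₂`. Walking clockwise
from `L` through `r` to `n₂` gives `a + λ₂ = λ₁ + π`.
* If `a > π`, then `λ₂ < λ₁`: the point `r` has a smaller leading angle than the true leader.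
* If `a = π`, then `r` is the antipode of `L`. A true leader remains the true leader once its
  antipode is removed, so `L` would lead both hypothetical configurations and not be undecided.
* If `a < π`, then `r` leads a hypothetical configuration that still contains `L` and `n₁`; there
  the leading angle of `r` is `π` (at its antipode) or at least `λ₂`, and both exceed `λ₁`.

Comparing gap sequences lexicographically amounts to comparing the sets of clockwise distances
by the least element of their symmetric difference. Removing the antipode of the leader `L` is
harmless because, for every other point `x`, this least element is smaller than `cw x L`: otherwise
the point at distance `cw x L` after `L` would beat `L`, its distances being those of `L`
shifted down by the same amount by which the distances of `x` are shifted up.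
-/

open Real Finset

section SetLex

variable {α : Type*} [LinearOrder α] {A B : Set α} {a b e f z : α}

def IsFirstDiff (A B : Set α) (z : α) : Prop :=
  z ∈ A ∧ z ∉ B ∧ ∀ w < z, (w ∈ A ↔ w ∈ B)

/-- Lexicographic order on sets, read as increasing sequences. -/
def SetLexLT (A B : Set α) : Prop := ∃ z, IsFirstDiff A B z

lemma SetLexLT.asymm (h : SetLexLT A B) : ¬ SetLexLT B A := by
  rintro ⟨z', hz'B, hz'A, hag'⟩
  obtain ⟨z, hzA, hzB, hag⟩ := h
  rcases lt_trichotomy z z' with h | rfl | h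
  · exact hzB ((hag' z h).mpr hzA)
  · exact hzB hz'B
  · exact hz'A ((hag z' h).mpr hz'B)

lemma SetLexLT.exists_le (h : SetLexLT A B) (hb : b ∈ B) : ∃ a ∈ A, a ≤ b := by
  obtain ⟨z, hzA, -, hag⟩ := h
  rcases le_or_gt z b with hle | hlt
  · exact ⟨z, hzA, hle⟩
  · exact ⟨b, (hag b hlt).mpr hb, le_rfl⟩

lemma IsFirstDiff.setLexLT_diff_singleton (h : IsFirstDiff A B z) (hf : f ∈ B)
    (hfe : f ≤ e ∨ z < e) : SetLexLT (A \ {e}) (B \ {f}) := by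
  obtain ⟨hzA, hzB, hag⟩ := h
  have hzf : z ≠ f := fun h => hzB (h ▸ hf)
  rcases eq_or_ne f e with rfl | hfe'
  · refine ⟨z, ⟨hzA, hzf⟩, fun h => hzB h.1, fun w hw => ?_⟩
    simp only [Set.mem_sdiff, hag w hw]
  rcases hzf.lt_or_gt with hzf | hfz
  · have hze : z < e := hfe.elim (hzf.trans_le) id
    refine ⟨z, ⟨hzA, hze.ne⟩, fun h => hzB h.1, fun w hw => ?_⟩
    simp only [Set.mem_sdiff, Set.mem_singleton_iff, hag w hw, (hw.trans hze).ne,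
      (hw.trans hzf).ne, not_false_eq_true, and_true]
  · have hfe : f < e := hfe.elim (lt_of_le_of_ne · hfe') hfz.trans
    refine ⟨f, ⟨(hag f hfz).mpr hf, hfe.ne⟩, fun h => h.2 rfl, fun w hw => ?_⟩
    simp only [Set.mem_sdiff, Set.mem_singleton_iff, hag w (hw.trans hfz), (hw.trans hfe).ne,
      hw.ne, not_false_eq_true, and_true]

lemma setLexLT_insert_insert_iff (hA : ∀ x ∈ A, a < x) (hB : ∀ x ∈ B, b < x) :
    SetLexLT (insert a A) (insert b B) ↔ a < b ∨ a = b ∧ SetLexLT A B := by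
  have hA' : ∀ x ∈ insert a A, a ≤ x := by
    rintro x (rfl | hx); exacts [le_rfl, (hA x hx).le]
  constructor
  · rintro ⟨z, hzA, hzB, hag⟩
    rcases lt_trichotomy a b with hab | rfl | hab
    · exact .inl hab
    · refine .inr ⟨rfl, z, hzA.resolve_left fun h => hzB (.inl h), fun h => hzB (.inr h),
        fun w hw => ?_⟩
      rcases eq_or_ne w a with rfl | hwa
      · exact iff_of_false (fun h => (hA w h).false) (fun h => (hB w h).false)
      · simpa [hwa] using hag w hw
    · have hb : b ∈ insert a A := (hag b (hab.trans_le (hA' z hzA))).mpr (.inl rfl)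
      exact absurd (hA' b hb) hab.not_ge
  · rintro (hab | ⟨rfl, z, hzA, hzB, hag⟩)
    · refine ⟨a, .inl rfl, ?_, fun w hw => iff_of_false ?_ ?_⟩
      · rintro (h | h)
        exacts [hab.ne h, (hab.trans (hB a h)).false]
      · exact fun h => (hA' w h).not_gt hw
      · rintro (h | h)
        exacts [(hw.trans hab).ne h, (hw.trans (hab.trans (hB w h))).false]
    · refine ⟨z, .inr hzA, ?_, fun w hw => ?_⟩
      · rintro (h | h)
        exacts [(hA z hzA).ne' h, hzB h]
      · simp only [Set.mem_insert_iff, hag w hw]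

lemma List.lex_iff_setLexLT : ∀ {l l' : List α}, l.Pairwise (· < ·) → l'.Pairwise (· < ·) →
    l.length = l'.length → (List.Lex (· < ·) l l' ↔ SetLexLT {x | x ∈ l} {x | x ∈ l'})
  | [], [], _, _, _ => iff_of_false List.not_lex_nil fun ⟨_, hz, _⟩ => List.not_mem_nil hz
  | a :: t, b :: t', hl, hl', hlen => by
    rw [List.pairwise_cons] at hl hl'
    have hcons : ∀ (c : α) (s : List α), {x | x ∈ c :: s} = insert c {x | x ∈ s} :=
      fun _ _ => Set.ext fun _ => List.mem_cons
    rw [List.cons_lex_cons_iff, hcons, hcons,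
      setLexLT_insert_insert_iff (A := {x | x ∈ t}) (B := {x | x ∈ t'}) hl.1 hl'.1,
      List.lex_iff_setLexLT hl.2 hl'.2 (by simpa using hlen)]

end SetLex

lemma List.lex_zipWith_sub_iff {α : Type*} [AddCommGroup α] [LinearOrder α]
    [IsOrderedAddMonoid α] {c : α} : ∀ {l l' : List α} (a : α), l.length = l'.length →
    (List.Lex (· < ·) (List.zipWith (· - ·) (l ++ [c]) (a :: l))
      (List.zipWith (· - ·) (l' ++ [c]) (a :: l')) ↔ List.Lex (· < ·) l l')
  | [], [], _, _ => iff_of_false (by simp) List.not_lex_nil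
  | b :: t, b' :: t', a, hlen => by
    simp only [List.cons_append, List.zipWith_cons_cons, List.cons_lex_cons_iff,
      sub_lt_sub_iff_right, sub_left_inj]
    refine or_congr_right (and_congr_right fun hb => ?_)
    subst hb
    exact List.lex_zipWith_sub_iff b (by simpa using hlen)

namespace Real.Angle

lemma eq_of_coe_eq_of_abs_sub_lt {x y : ℝ} (h : (x : Angle) = y) (hxy : |x - y| < 2 * π) :
    x = y := by
  obtain ⟨k, hk⟩ := angle_eq_iff_two_pi_dvd_sub.mp h
  rw [hk, abs_mul, abs_of_pos two_pi_pos, mul_lt_iff_lt_one_right two_pi_pos] at hxy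
  have hk0 : k = 0 := Int.abs_lt_one_iff.mp (by exact_mod_cast hxy)
  simpa [hk0, sub_eq_zero] using hk

end Real.Angle

section Clockwise

variable {p q u : Angle}

lemma cw_nonneg (p q : Angle) : 0 ≤ cw p q := by
  unfold cw
  split_ifs with h
  · exact h
  · linarith [(q - p).neg_pi_lt_toReal, pi_pos]

lemma cw_lt_two_pi (p q : Angle) : cw p q < 2 * π := by
  unfold cw
  split_ifs with h
  · linarith [(q - p).toReal_le_pi, pi_pos]
  · linarith

lemma coe_cw (p q : Angle) : (cw p q : Angle) = q - p := by
  unfold cw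
  split_ifs
  · exact (q - p).coe_toReal
  · rw [Angle.coe_add, Angle.coe_two_pi, add_zero, Angle.coe_toReal]

lemma cw_eq_of_coe_eq {c : ℝ} (h0 : 0 ≤ c) (h1 : c < 2 * π) (h : (c : Angle) = q - p) :
    cw p q = c :=
  Angle.eq_of_coe_eq_of_abs_sub_lt (by rw [coe_cw, h]) <| abs_sub_lt_iff.mpr
    ⟨by linarith [cw_lt_two_pi p q], by linarith [cw_nonneg p q]⟩

@[simp]
lemma cw_self (p : Angle) : cw p p = 0 :=
  cw_eq_of_coe_eq le_rfl two_pi_pos (by simp)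

lemma cw_injective (p : Angle) : Function.Injective (cw p) := fun q q' h =>
  sub_left_injective ((coe_cw p q).symm.trans (h ▸ coe_cw p q'))

lemma cw_pos (h : q ≠ p) : 0 < cw p q :=
  (cw_nonneg p q).lt_of_ne fun h0 => h (cw_injective p (h0.symm.trans (cw_self p).symm))

lemma cw_add_cw (h : cw p q + cw q u < 2 * π) : cw p u = cw p q + cw q u :=
  cw_eq_of_coe_eq (add_nonneg (cw_nonneg p q) (cw_nonneg q u)) h
    (by rw [Angle.coe_add, coe_cw, coe_cw]; abel)

lemma cw_sub_cw (h : cw p q ≤ cw p u) : cw q u = cw p u - cw p q :=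
  cw_eq_of_coe_eq (sub_nonneg.mpr h) (by linarith [cw_lt_two_pi p u, cw_nonneg p q])
    (by rw [Angle.coe_sub, coe_cw, coe_cw]; abel)

lemma cw_swap (h : q ≠ p) : cw q p = 2 * π - cw p q :=
  cw_eq_of_coe_eq (by linarith [cw_lt_two_pi p q]) (by linarith [cw_pos h])
    (by rw [Angle.coe_sub, Angle.coe_two_pi, coe_cw]; abel)

lemma cw_antipode (p : Angle) : cw p (antipode p) = π :=
  cw_eq_of_coe_eq pi_pos.le (by linarith [pi_pos]) (by rw [antipode]; abel)

lemma ne_antipode (p : Angle) : p ≠ antipode p := fun h =>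
  pi_ne_zero (by rw [← cw_antipode p, ← h, cw_self])

end Clockwise

def cwDists (S : Finset Angle) (p : Angle) : Finset ℝ := (S.erase p).image (cw p)

section CwDists

variable {S : Finset Angle} {p q x : Angle} {t : ℝ}

lemma mem_cwDists : t ∈ cwDists S p ↔ ∃ x ∈ S, x ≠ p ∧ cw p x = t := by
  simp only [cwDists, mem_image, mem_erase]
  exact ⟨fun ⟨x, ⟨hxp, hx⟩, h⟩ => ⟨x, hx, hxp, h⟩,
    fun ⟨x, hx, hxp, h⟩ => ⟨x, ⟨hxp, hx⟩, h⟩⟩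

lemma cw_mem_cwDists (hx : x ∈ S) (hxp : x ≠ p) : cw p x ∈ cwDists S p :=
  mem_cwDists.mpr ⟨x, hx, hxp, rfl⟩

lemma pos_of_mem_cwDists (h : t ∈ cwDists S p) : 0 < t := by
  obtain ⟨x, -, hxp, rfl⟩ := mem_cwDists.mp h
  exact cw_pos hxp

lemma lt_two_pi_of_mem_cwDists (h : t ∈ cwDists S p) : t < 2 * π := by
  obtain ⟨x, -, -, rfl⟩ := mem_cwDists.mp h
  exact cw_lt_two_pi p x

lemma mem_cwDists_iff_add_mem (ht : 0 < t) (ht' : cw p q + t < 2 * π) :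
    t ∈ cwDists S q ↔ cw p q + t ∈ cwDists S p := by
  simp only [mem_cwDists]
  constructor
  · rintro ⟨v, hv, hvq, rfl⟩
    have hpv := cw_add_cw ht'
    refine ⟨v, hv, ?_, hpv⟩
    rintro rfl
    linarith [cw_self v, cw_nonneg v q]
  · rintro ⟨u, hu, -, hpu⟩
    have hqu : cw q u = t := by rw [cw_sub_cw (hpu ▸ le_add_of_nonneg_right ht.le), hpu]; ring
    refine ⟨u, hu, ?_, hqu⟩
    rintro rfl
    linarith [cw_self u]

lemma cwDists_erase (a : Angle) : cwDists (S.erase a) p = (cwDists S p).erase (cw p a) := by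
  rw [cwDists, erase_right_comm, image_erase (cw_injective p), cwDists]

lemma dists_eq_cons (hp : p ∈ S) : dists S p = 0 :: (cwDists S p).sort (· ≤ ·) := by
  have himage : S.image (cw p) = insert 0 (cwDists S p) := by
    conv_lhs => rw [← insert_erase hp]
    rw [image_insert, cw_self, cwDists]
  rw [dists, himage]
  exact sort_insert _ (fun _ ht => (pos_of_mem_cwDists ht).le)
    fun h => (pos_of_mem_cwDists h).false

lemma card_cwDists (hp : p ∈ S) : (cwDists S p).card = S.card - 1 := by
  rw [cwDists, card_image_of_injective _ (cw_injective p), card_erase_of_mem hp]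

end CwDists

section Leader

variable {S : Finset Angle} {p q x L : Angle}

lemma lexLt_gapSeq_iff (hp : p ∈ S) (hq : q ∈ S) :
    lexLt (gapSeq S p) (gapSeq S q) ↔ SetLexLT (cwDists S p : Set ℝ) (cwDists S q) := by
  have hlen : ((cwDists S p).sort (· ≤ ·)).length = ((cwDists S q).sort (· ≤ ·)).length := by
    rw [length_sort, length_sort, card_cwDists hp, card_cwDists hq]
  have hset : ∀ s : Finset ℝ, {x | x ∈ s.sort (· ≤ ·)} = s := fun s => by
    rw [← List.coe_toFinset, sort_toFinset]
  rw [lexLt, gapSeq, gapSeq, dists_eq_cons hp, dists_eq_cons hq, List.tail_cons, List.tail_cons,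
    List.lex_zipWith_sub_iff 0 hlen,
    List.lex_iff_setLexLT ((sortedLT_sort _).pairwise) ((sortedLT_sort _).pairwise) hlen,
    hset, hset]

lemma trueLeader_iff :
    TrueLeader S p ↔ p ∈ S ∧ ∀ x ∈ S, x ≠ p → SetLexLT (cwDists S p : Set ℝ) (cwDists S x) :=
  and_congr_right fun hp => forall₂_congr fun _ hx => imp_congr_right fun _ =>
    lexLt_gapSeq_iff hp hx

lemma TrueLeader.setLexLT (hp : TrueLeader S p) (hx : x ∈ S) (hxp : x ≠ p) :
    SetLexLT (cwDists S p : Set ℝ) (cwDists S x) :=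
  (trueLeader_iff.mp hp).2 x hx hxp

lemma TrueLeader.exists_cw_le (hp : TrueLeader S p) (hq : q ∈ S) (hqp : q ≠ p) (hx : x ∈ S)
    (hxq : x ≠ q) : ∃ y ∈ S, y ≠ p ∧ cw p y ≤ cw q x := by
  obtain ⟨t, ht, hle⟩ := (hp.setLexLT hq hqp).exists_le (cw_mem_cwDists hx hxq)
  obtain ⟨y, hy, hyp, rfl⟩ := mem_cwDists.mp ht
  exact ⟨y, hy, hyp, hle⟩

lemma TrueLeader.lt_cw_of_isFirstDiff (hL : TrueLeader S L) (hxL : x ≠ L) {z : ℝ}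
    (hz : IsFirstDiff (cwDists S L : Set ℝ) (cwDists S x) z) : z < cw x L := by
  obtain ⟨hzL, hzx, hagree⟩ := hz
  by_contra! hle
  set δ := cw x L
  have hδx : δ ∈ cwDists S x := cw_mem_cwDists hL.1 hxL.symm
  have hδz : δ < z := hle.lt_of_ne fun h => hzx (h ▸ hδx)
  obtain ⟨w, hw, hwL, hLw⟩ := mem_cwDists.mp ((hagree δ hδz).mpr hδx)
  have hz2π := lt_two_pi_of_mem_cwDists hzL
  have shift_w : ∀ t, 0 < t → t ≤ z - δ → (t ∈ cwDists S w ↔ δ + t ∈ cwDists S L) :=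
    fun t ht ht' => hLw ▸ mem_cwDists_iff_add_mem ht (by rw [hLw]; linarith)
  have shift_L : ∀ t, 0 < t → t ≤ z - δ → (t ∈ cwDists S L ↔ δ + t ∈ cwDists S x) :=
    fun t ht ht' => mem_cwDists_iff_add_mem ht (by linarith)
  have hwins : IsFirstDiff (cwDists S w : Set ℝ) (cwDists S L) (z - δ) := by
    refine ⟨?_, ?_, fun t ht => ?_⟩
    · simpa using (shift_w _ (by linarith) le_rfl).mpr (by simpa using hzL)
    · simpa using mt (shift_L _ (by linarith) le_rfl).mp (by simpa using hzx)
    · rcases le_or_gt t 0 with ht0 | ht0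
      · exact iff_of_false (fun h => ht0.not_gt (pos_of_mem_cwDists h))
          (fun h => ht0.not_gt (pos_of_mem_cwDists h))
      · simp only [Finset.mem_coe, shift_w t ht0 ht.le, shift_L t ht0 ht.le]
        exact hagree _ (by linarith)
  exact (hL.setLexLT hw hwL).asymm ⟨z - δ, hwins⟩

lemma TrueLeader.erase_antipode (hL : TrueLeader S L) : TrueLeader (S.erase (antipode L)) L := by
  by_cases hm : antipode L ∈ S
  swap
  · rwa [erase_eq_of_notMem hm]
  refine trueLeader_iff.mpr ⟨mem_erase.mpr ⟨ne_antipode L, hL.1⟩, fun x hx hxL => ?_⟩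
  obtain ⟨hxm, hxS⟩ := mem_erase.mp hx
  obtain ⟨z, hz⟩ := hL.setLexLT hxS hxL
  rw [cwDists_erase, cwDists_erase, coe_erase, coe_erase, cw_antipode]
  refine hz.setLexLT_diff_singleton (cw_mem_cwDists hm (Ne.symm hxm)) ?_
  refine (le_or_gt (cw x (antipode L)) π).imp_right fun hgt => ?_
  have hxL' : cw x L = cw x (antipode L) - π :=
    cw_eq_of_coe_eq (by linarith) (by linarith [cw_lt_two_pi x (antipode L)])
      (by rw [Angle.coe_sub, coe_cw, antipode]; abel)
  linarith [hL.lt_cw_of_isFirstDiff hxL hz, cw_lt_two_pi x (antipode L)]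

lemma Undecided.antipode_notMem_of_trueLeader (hU : Undecided S L) (hL : TrueLeader S L) :
    antipode L ∉ S := by
  intro hm
  have hC1 : TrueLeader (C1 S L) L := by rwa [C1, insert_eq_of_mem hm]
  rcases hU.2.2.2 with ⟨-, h⟩ | ⟨-, h⟩
  · exact h hC1
  · exact h hL.erase_antipode

lemma Undecided.exists_cw_le {r : Angle} (hr : Undecided S r) (hq : q ∈ S) (hqr : q ≠ r)
    (hqm : q ≠ antipode r) (hx : x ∈ S) (hxq : x ≠ q) (hxm : x ≠ antipode r) :
    ∃ y ∈ insert (antipode r) S, y ≠ r ∧ cw r y ≤ cw q x := by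
  rcases Xor.or hr.2.2.2 with h | h
  · obtain ⟨y, hy, hyr, hle⟩ :=
      h.exists_cw_le (mem_erase.mpr ⟨hqm, hq⟩) hqr (mem_erase.mpr ⟨hxm, hx⟩) hxq
    exact ⟨y, mem_insert_of_mem (mem_of_mem_erase hy), hyr, hle⟩
  · exact h.exists_cw_le (mem_insert_of_mem hq) hqr (mem_insert_of_mem hx) hxq

lemma TrueLeader.cw_le_of_isCwNbr {r n₁ n₂ : Angle} (hL : TrueLeader S L) (hr : r ∈ S)
    (hrL : r ≠ L) (h1 : IsCwNbr S L n₁) (h2 : IsCwNbr S r n₂) : cw L n₁ ≤ cw r n₂ := by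
  obtain ⟨y, hy, hyL, hle⟩ := hL.exists_cw_le hr hrL h2.1 h2.2.1
  exact (h1.2.2 y hy hyL).trans hle

lemma Undecided.cw_le_of_isCwNbr {r n₁ n₂ : Angle} (hr : Undecided S r) (hL : L ∈ S)
    (hrL : r ≠ L) (ha : cw L r < π) (h1 : IsCwNbr S L n₁) (h2 : IsCwNbr S r n₂) :
    cw r n₂ ≤ cw L n₁ := by
  have hle₁ : cw L n₁ ≤ cw L r := h1.2.2 r hr.1 hrL
  have hLm : cw L (antipode r) = cw L r + π := by
    have hrm := cw_antipode r
    rw [cw_add_cw (q := r) (by linarith), hrm]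
  have hLm' : L ≠ antipode r := fun h => by
    rw [← h, cw_self] at hLm
    linarith [cw_nonneg L r, pi_pos]
  have hn₁m : n₁ ≠ antipode r := fun h => by
    rw [h, hLm] at hle₁
    linarith [pi_pos]
  obtain ⟨y, hy, hyr, hle⟩ := hr.exists_cw_le hL hrL.symm hLm' h1.1 h1.2.1 hn₁m
  rcases mem_insert.mp hy with rfl | hyS
  · linarith [cw_antipode r]
  · exact (h2.2.2 y hyS hyr).trans hle

end Leader

theorem stmt12_general (S : Finset Real.Angle)
    (L r : Real.Angle) (hL : TrueLeader S L) (hrL : r ≠ L) (hr : r ∈ S)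
    (hUL : Undecided S L) (hUr : Undecided S r)
    (n₁ n₂ : Real.Angle) (h1 : IsCwNbr S L n₁) (h2 : IsCwNbr S r n₂) :
    n₂ ≠ antipode n₁ := by
  intro hn₂
  have hle₁ : cw L n₁ ≤ cw L r := h1.2.2 r hr hrL
  have hle₂ : cw r n₂ ≤ 2 * π - cw L r := cw_swap hrL ▸ h2.2.2 L hL.1 hrL.symm
  have hsum : cw L r + cw r n₂ = cw L n₁ + π := by
    refine Angle.eq_of_coe_eq_of_abs_sub_lt ?_ (abs_sub_lt_iff.mpr ⟨?_, ?_⟩)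
    · rw [Angle.coe_add, Angle.coe_add, coe_cw, coe_cw, coe_cw, hn₂, antipode]; abel
    all_goals linarith [cw_pos h1.2.1, cw_pos h2.2.1, pi_pos]
  rcases lt_trichotomy (cw L r) π with ha | ha | ha
  · linarith [hUr.cw_le_of_isCwNbr hL.1 hrL ha h1 h2]
  · have hantipode : r = antipode L := cw_injective L (ha.trans (cw_antipode L).symm)
    exact hUL.antipode_notMem_of_trueLeader hL (hantipode ▸ hr)
  · linarith [hL.cw_le_of_isCwNbr hr hrL h1 h2]

theorem stmt12 (S : Finset Real.Angle) (hasym : RotAsym S)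
    (L r : Real.Angle) (hL : TrueLeader S L) (hrL : r ≠ L) (hr : r ∈ S)
    (hUL : Undecided S L) (hUr : Undecided S r)
    (n₁ n₂ : Real.Angle) (h1 : IsCwNbr S L n₁) (h2 : IsCwNbr S r n₂) :
    n₂ ≠ antipode n₁ :=
  stmt12_general S L r hL hrL hr hUL hUr n₁ n₂ h1 h2
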